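/- arXiv:2506.22312 — 2 statements merged into one kernel-verified Lean document; each statement's English description precedes it below -/
import Mathlib

section
/- The third-order 2D smoothness indicator is indeed the claimed sum of perfect squares: for u(x,y) = u_0 + u_x L_1(x) + u_y L_1(y) + u_{xx} L_2(x) + u_{yy} L_2(y) + u_{xy} L_1(x)L_1(y), one has Σ_{|α|=1,2} ∫_{[−1/2,1/2]²} (∂^α u)² dx dy = u_x² + u_y² + (13/3)(u_{xx}² + u_{yy}²) + (7/6) u_{xy}², where the sum is over the multi-indices α ∈ {(1,0),(0,1),(2,0),(1,1),(0,2)}. -/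
/-!
Every partial derivative of `u` of order one is affine in `(x, y)` and every one of order two is
constant. On the unit cell `t ↦ t` has mean `0` and `t ↦ t²` has mean `1/12`, so the mean of
`(a + b x + c y)²` is `a² + (b² + c²)/12`. With `∂ₓu = uₓ + 2uₓₓx + uₓᵧy`,
`∂ᵧu = uᵧ + uₓᵧx + 2uᵧᵧy`, `∂ₓₓu = 2uₓₓ`, `∂ₓᵧu = uₓᵧ`, `∂ᵧᵧu = 2uᵧᵧ` this gives the coefficients
`4 + 4/12 = 13/3` of `uₓₓ²`, `uᵧᵧ²` and `1 + 2/12 = 7/6` of `uₓᵧ²`.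
-/

open intervalIntegral

theorem hasDerivAt_quadratic (a b c x : ℝ) :
    HasDerivAt (fun t => a + b * t + c * t ^ 2) (b + 2 * c * x) x :=
  ((((hasDerivAt_id x).const_mul b).const_add a).add
    ((hasDerivAt_pow 2 x).const_mul c)).congr_deriv (by simp; ring)

theorem integral_quadratic_unitCell (a b c : ℝ) :
    ∫ t in (-(1:ℝ)/2)..(1/2), (a + b * t + c * t ^ 2) = a + c / 12 := by
  have hint {f : ℝ → ℝ} (hf : Continuous f) :
      IntervalIntegrable f MeasureTheory.volume (-1/2) (1/2) :=
    hf.intervalIntegrable _ _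
  rw [integral_add (hint (by fun_prop)) (hint (by fun_prop)),
    integral_add (hint (by fun_prop)) (hint (by fun_prop)),
    integral_const, integral_const_mul, integral_const_mul, integral_id, integral_pow]
  norm_num
  ring

theorem integral_integral_sq_affine_unitCell (a b c : ℝ) :
    ∫ x in (-(1:ℝ)/2)..(1/2), ∫ y in (-(1:ℝ)/2)..(1/2), (a + b * x + c * y) ^ 2
      = a ^ 2 + (b ^ 2 + c ^ 2) / 12 := by
  have hinner (x : ℝ) :
      ∫ y in (-(1:ℝ)/2)..(1/2), (a + b * x + c * y) ^ 2 = (a + b * x) ^ 2 + c ^ 2 / 12 := by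
    convert integral_quadratic_unitCell ((a + b * x) ^ 2) (2 * (a + b * x) * c) (c ^ 2) using 3
    ring
  calc ∫ x in (-(1:ℝ)/2)..(1/2), ∫ y in (-(1:ℝ)/2)..(1/2), (a + b * x + c * y) ^ 2
      = ∫ x in (-(1:ℝ)/2)..(1/2), ((a ^ 2 + c ^ 2 / 12) + 2 * a * b * x + b ^ 2 * x ^ 2) := by
        congr 1; funext x; rw [hinner]; ring
    _ = a ^ 2 + (b ^ 2 + c ^ 2) / 12 := by rw [integral_quadratic_unitCell]; ring

/-- The third-order 2D smoothness indicator is a sum of perfect squares. -/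
theorem stmt12 (u0 ux uy uxx uyy uxy : ℝ) :
    let L1 : ℝ → ℝ := fun t => t
    let L2 : ℝ → ℝ := fun t => t ^ 2 - 1 / 12
    let u : ℝ → ℝ → ℝ := fun x y =>
      u0 + ux * L1 x + uy * L1 y + uxx * L2 x + uyy * L2 y + uxy * L1 x * L1 y
    (∫ x in (-(1:ℝ)/2)..(1/2), ∫ y in (-(1:ℝ)/2)..(1/2),
        (deriv (fun x' => u x' y) x) ^ 2)
    + (∫ x in (-(1:ℝ)/2)..(1/2), ∫ y in (-(1:ℝ)/2)..(1/2),
        (deriv (fun y' => u x y') y) ^ 2)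
    + (∫ x in (-(1:ℝ)/2)..(1/2), ∫ y in (-(1:ℝ)/2)..(1/2),
        (deriv (fun x' => deriv (fun x'' => u x'' y) x') x) ^ 2)
    + (∫ x in (-(1:ℝ)/2)..(1/2), ∫ y in (-(1:ℝ)/2)..(1/2),
        (deriv (fun y' => deriv (fun x' => u x' y') x) y) ^ 2)
    + (∫ x in (-(1:ℝ)/2)..(1/2), ∫ y in (-(1:ℝ)/2)..(1/2),
        (deriv (fun y' => deriv (fun y'' => u x y'') y') y) ^ 2)
    = ux ^ 2 + uy ^ 2 + (13 / 3) * (uxx ^ 2 + uyy ^ 2) + (7 / 6) * uxy ^ 2 := by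
  intro L1 L2 u
  have hux (x y : ℝ) : deriv (fun x' => u x' y) x = ux + 2 * uxx * x + uxy * y := by
    have hsection : (fun x' => u x' y) = fun t =>
        (u0 + uy * y + uyy * (y ^ 2 - 1 / 12) - uxx / 12) + (ux + uxy * y) * t + uxx * t ^ 2 := by
      funext t; simp only [u, L1, L2]; ring
    rw [hsection, (hasDerivAt_quadratic _ _ _ x).deriv]; ring
  have huy (x y : ℝ) : deriv (fun y' => u x y') y = uy + uxy * x + 2 * uyy * y := by
    have hsection : (fun y' => u x y') = fun t =>
        (u0 + ux * x + uxx * (x ^ 2 - 1 / 12) - uyy / 12) + (uy + uxy * x) * t + uyy * t ^ 2 := by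
      funext t; simp only [u, L1, L2]; ring
    rw [hsection, (hasDerivAt_quadratic _ _ _ y).deriv]
  have huxx (x y : ℝ) : deriv (fun x' => deriv (fun x'' => u x'' y) x') x = 2 * uxx := by
    simp [hux]
  have huxy (x y : ℝ) : deriv (fun y' => deriv (fun x' => u x' y') x) y = uxy := by
    simp [hux]
  have huyy (x y : ℝ) : deriv (fun y' => deriv (fun y'' => u x y'') y') y = 2 * uyy := by
    simp [huy]
  simp only [huxx, huxy, huyy]
  simp only [hux, huy, integral_integral_sq_affine_unitCell, integral_const, smul_eq_mul]
  ring
end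

section
/- The fifth-order 1D smoothness indicator derivative-integral formula: for p(x) = u_0 + u_x L_1(x) + u_{xx} L_2(x) + u_{xxx} L_3(x) + u_{xxxx} L_4(x) with L_1(x)=x, L_2(x)=x²−1/12, L_3(x)=x³−3x/20, L_4(x)=x⁴−3x²/14+3/560, one has Σ_{k=1}^{4} ∫_{−1/2}^{1/2} (p^{(k)}(x))² dx = (u_x + u_{xxx}/10)² + (13/3)(u_{xx} + (123/455) u_{xxxx})² + (781/20) u_{xxx}² + (1421461/2275) u_{xxxx}², exhibiting the smoothness indicator as a sum of perfect squares with positive coefficients. -/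
/-!
In the monomial basis each derivative of a quartic is again a quartic with shifted
coefficients, and `∫_{-1/2}^{1/2} x ^ n` is `1 / (2 ^ n (n + 1))` for even `n` and `0` for odd
`n`. The left-hand side is therefore an explicit quadratic form in the Legendre coefficients,
and completing the square gives the right-hand side.
-/

open intervalIntegral

def quartic (a b c d e : ℝ) (x : ℝ) : ℝ := a + b * x + c * x ^ 2 + d * x ^ 3 + e * x ^ 4

theorem hasDerivAt_quartic (a b c d e x : ℝ) :
    HasDerivAt (quartic a b c d e) (quartic b (2 * c) (3 * d) (4 * e) 0 x) x := by
  refine (((((hasDerivAt_const x a).add ((hasDerivAt_id x).const_mul b)).add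
    ((hasDerivAt_pow 2 x).const_mul c)).add ((hasDerivAt_pow 3 x).const_mul d)).add
    ((hasDerivAt_pow 4 x).const_mul e)).congr_deriv ?_
  simp only [quartic]
  push_cast
  ring

theorem deriv_quartic (a b c d e : ℝ) :
    deriv (quartic a b c d e) = quartic b (2 * c) (3 * d) (4 * e) 0 :=
  funext fun x => (hasDerivAt_quartic a b c d e x).deriv

theorem integral_sum_mul_pow {n : ℕ} (c : Fin n → ℝ) (a b : ℝ) :
    ∫ x in a..b, ∑ i, c i * x ^ (i : ℕ)
      = ∑ i, c i * ((b ^ ((i : ℕ) + 1) - a ^ ((i : ℕ) + 1)) / ((i : ℕ) + 1)) := by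
  rw [integral_finsetSum (f := fun i x => c i * x ^ (i : ℕ))
    fun i _ => (continuous_const.mul (continuous_pow _)).intervalIntegrable _ _]
  simp only [integral_const_mul, integral_pow]

theorem integral_sq_quartic (a b c d e : ℝ) :
    ∫ x in (-(1:ℝ)/2)..(1/2), quartic a b c d e x ^ 2
      = a ^ 2 + (b ^ 2 + 2 * a * c) / 12 + (c ^ 2 + 2 * b * d + 2 * a * e) / 80
        + (d ^ 2 + 2 * c * e) / 448 + e ^ 2 / 2304 := by
  have hsq : (fun x => quartic a b c d e x ^ 2) = fun x => ∑ i : Fin 9, ![a ^ 2, 2 * a * b,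
      b ^ 2 + 2 * a * c, 2 * a * d + 2 * b * c, c ^ 2 + 2 * b * d + 2 * a * e,
      2 * c * d + 2 * b * e, d ^ 2 + 2 * c * e, 2 * d * e, e ^ 2] i * x ^ (i : ℕ) := by
    funext x
    simp only [Fin.sum_univ_succ, Fin.sum_univ_zero, Matrix.cons_val_zero, Matrix.cons_val_succ,
      Fin.val_zero, Fin.val_succ, quartic]
    ring
  rw [hsq, integral_sum_mul_pow]
  simp only [Fin.sum_univ_succ, Fin.sum_univ_zero, Matrix.cons_val_zero, Matrix.cons_val_succ,
    Fin.val_zero, Fin.val_succ]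
  ring

/-- The fifth-order 1D smoothness indicator as a sum of perfect squares. -/
theorem stmt13 (u0 ux uxx uxxx uxxxx : ℝ) :
    let p : ℝ → ℝ := fun x =>
      u0 + ux * x + uxx * (x ^ 2 - 1 / 12) + uxxx * (x ^ 3 - 3 * x / 20)
      + uxxxx * (x ^ 4 - 3 * x ^ 2 / 14 + 3 / 560)
    (∑ k ∈ Finset.Icc 1 4, ∫ x in (-(1:ℝ)/2)..(1/2), (iteratedDeriv k p x) ^ 2)
    = (ux + uxxx / 10) ^ 2 + (13 / 3) * (uxx + (123 / 455) * uxxxx) ^ 2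
      + (781 / 20) * uxxx ^ 2 + (1421461 / 2275) * uxxxx ^ 2 := by
  intro p
  have hp : p = quartic (u0 - uxx / 12 + 3 * uxxxx / 560) (ux - 3 * uxxx / 20)
      (uxx - 3 * uxxxx / 14) uxxx uxxxx := by
    funext x
    simp only [p, quartic]
    ring
  simp only [hp, Finset.sum_Icc_succ_top, Finset.Icc_self, Finset.sum_singleton, Nat.one_le_ofNat,
    Nat.reduceAdd, iteratedDeriv_succ', iteratedDeriv_zero, deriv_quartic, integral_sq_quartic]
  ring
end
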